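/- In any partial evaluation tree t, for each natural number n there is at most one node α in the domain of t with |α| = n whose judgement is incomplete (has result '?'). -/

import Mathlib

/-- Judgements over configurations `C` and extended results `Option R`
    (`none` stands for the special extra result such as `?`, `wrong`, or `∞`). -/
abbrev Judg (C R : Type) := C × Option R

/-- Lift a complete judgement to an extended judgement. -/
def liftJ {C R : Type} (j : C × R) : Judg C R := (j.1, some j.2)

/-- Bounded-premises condition. -/
def BP {C R : Type} (Rules : Set (List (C × R) × (C × R))) : Prop :=
  ∀ c : C, ∃ b : ℕ, ∀ js res, (js, (c, res)) ∈ Rules → js.length ≤ b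

/-- The extended rule set `Rules_?`: original rules (lifted), start axioms
    `c ⇒ ?`, and partial rules. -/
def RulesQ {C R : Type} (Rules : Set (List (C × R) × (C × R))) :
    Set (List (Judg C R) × Judg C R) :=
  { r | (∃ c : C, r = ([], (c, none)))
      ∨ (∃ (js : List (C × R)) (c : C) (res : R), (js, (c, res)) ∈ Rules ∧ r = (js.map liftJ, (c, some res)))
      ∨ (∃ (js : List (C × R)) (c : C) (res : R) (i : ℕ) (hi : i < js.length) (u : Option R),
          (js, (c, res)) ∈ Rules ∧
          r = ((js.take i).map liftJ ++ [((js[i]'hi).1, u)], (c, none))) }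

/-- Ordered trees labelled in `L`: partial functions from positions (lists of
    child indices) to labels, with nonempty, prefix-closed,
    sibling-downward-closed domain. -/
structure OTree (L : Type) where
  label : List ℕ → Option L
  root_isSome : (label []).isSome
  pref : ∀ α n, (label (α ++ [n])).isSome → (label α).isSome
  sib : ∀ α n k, (label (α ++ [n])).isSome → k ≤ n → (label (α ++ [k])).isSome

/-- A tree is an evaluation tree in a rule set: at every node, the ordered
    children labels together with the node label form a rule. -/
def IsTreeIn {L : Type} (Rules : Set (List L × L)) (t : OTree L) : Prop :=
  ∀ α l, t.label α = some l →
    ∃ ps : List L, (∀ i : ℕ, t.label (α ++ [i]) = ps[i]?) ∧ (ps, l) ∈ Rules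

/-- Partial evaluation trees: evaluation trees in `Rules_?`. -/
def IsPET {C R : Type} (Rules : Set (List (C × R) × (C × R)))
    (t : OTree (Judg C R)) : Prop :=
  IsTreeIn (RulesQ Rules) t

/-- The refinement relation `⊑` on trees labelled by possibly-incomplete
    judgements. -/
def TreeLE {C R : Type} (t t' : OTree (Judg C R)) : Prop :=
  (∀ α, (t.label α).isSome → (t'.label α).isSome) ∧
  ∀ α c u, t.label α = some (c, u) →
    (∃ (u' : Option R), t'.label α = some (c, u')) ∧
    (u.isSome → ∀ β, t.label (α ++ β) = t'.label (α ++ β))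

/-- Strict refinement `⊏`. -/
def TreeLT {C R : Type} (t t' : OTree (Judg C R)) : Prop :=
  TreeLE t t' ∧ t ≠ t'

/-- A tree is finite if its domain is finite. -/
def TreeFinite {L : Type} (t : OTree L) : Prop :=
  Set.Finite {α | (t.label α).isSome}

/-- Well-formedness: every subtree rooted at a complete node is finite. -/
def WellFormed {C R : Type} (t : OTree (Judg C R)) : Prop :=
  ∀ α c r, t.label α = some (c, some r) →
    Set.Finite {β | (t.label (α ++ β)).isSome}

/-- `t` is a least upper bound of the sequence `f` w.r.t. `⊑`. -/
def IsLubSeq {C R : Type} (f : ℕ → OTree (Judg C R)) (t : OTree (Judg C R)) : Prop :=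
  (∀ n, TreeLE (f n) t) ∧ ∀ t', (∀ n, TreeLE (f n) t') → TreeLE t t'

/-- Inductive derivability in a rule set with finite-list premises. -/
inductive IndDerives {J : Type} (Rules : Set (List J × J)) : J → Prop where
  | node (ps : List J) (j : J) : (ps, j) ∈ Rules →
      (∀ p ∈ ps, IndDerives Rules p) → IndDerives Rules j

/-- A set of judgements is consistent w.r.t. a rule set. -/
def ConsistentL {J : Type} (Rules : Set (List J × J)) (X : Set J) : Prop :=
  ∀ j ∈ X, ∃ (ps : List J), (ps, j) ∈ Rules ∧ ∀ p ∈ ps, p ∈ X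

/-- Coinductive derivability: membership in some consistent set. -/
def CoDerives {J : Type} (Rules : Set (List J × J)) (j : J) : Prop :=
  ∃ (X : Set J), ConsistentL Rules X ∧ j ∈ X

/-- Derivability in a generalised inference system (rules + corules):
    membership in a consistent set all of whose elements have a finite
    derivation using both rules and corules. -/
def GenDerives {J : Type} (rules corules : Set (List J × J)) (j : J) : Prop :=
  ∃ (X : Set J), ConsistentL rules X ∧ (∀ x ∈ X, IndDerives (rules ∪ corules) x) ∧ j ∈ X

/-!
An incomplete premise occurs in `Rules_?` only as the last premise of a partial rule, whose
conclusion is itself incomplete. Hence the parent of an incomplete node is incomplete and the node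
is its last child; by induction on depth, two incomplete nodes at the same depth coincide.
-/

theorem conclusion_incomplete_and_premise_last_of_mem_rulesQ {C R : Type}
    {Rules : Set (List (C × R) × (C × R))} {ps : List (Judg C R)} {j : Judg C R}
    (hr : (ps, j) ∈ RulesQ Rules) {k : ℕ} {c : C}
    (hk : ps[k]? = some (c, none)) : j.2 = none ∧ k + 1 = ps.length := by
  rcases hr with ⟨c₀, rfl, rfl⟩ | ⟨js, c₀, res, -, rfl, rfl⟩ |
      ⟨js, c₀, res, i, hi, u, -, rfl, rfl⟩
  · simp at hk
  · simp [liftJ] at hk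
  · refine ⟨rfl, ?_⟩
    have hlen : ((js.take i).map liftJ).length = i := by simp [hi.le]
    rcases lt_trichotomy k i with hlt | rfl | hgt
    · rw [List.getElem?_append_left (by omega), List.getElem?_map] at hk
      simp [liftJ] at hk
    · simp [hi.le]
    · rw [List.getElem?_append_right (by omega), hlen] at hk
      simp [show k - i ≠ 0 by omega] at hk

namespace IsPET

variable {C R : Type} {Rules : Set (List (C × R) × (C × R))} {t : OTree (Judg C R)}

theorem incomplete_parent_and_last_child (hpet : IsPET Rules t) {γ : List ℕ} {k : ℕ} {c : C}
    (hk : t.label (γ ++ [k]) = some (c, none)) :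
    ∃ (c₀ : C) (ps : List (Judg C R)), t.label γ = some (c₀, none) ∧
      (∀ i, t.label (γ ++ [i]) = ps[i]?) ∧ k + 1 = ps.length := by
  obtain ⟨j, hj⟩ := Option.isSome_iff_exists.mp (t.pref γ k (by simp [hk]))
  obtain ⟨ps, hchildren, hr⟩ := hpet γ j hj
  obtain ⟨hj₂, hlen⟩ :=
    conclusion_incomplete_and_premise_last_of_mem_rulesQ hr (hk ▸ hchildren k).symm
  exact ⟨j.1, ps, by rw [hj, ← hj₂], hchildren, hlen⟩

theorem eq_of_incomplete_of_length_eq (hpet : IsPET Rules t) {α β : List ℕ} {c c' : C}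
    (hlen : α.length = β.length) (hα : t.label α = some (c, none))
    (hβ : t.label β = some (c', none)) : α = β := by
  induction α using List.reverseRecOn generalizing β c c' with
  | nil => exact (List.length_eq_zero_iff.mp hlen.symm).symm
  | append_singleton γ k ih =>
    obtain rfl | ⟨δ, l, rfl⟩ := β.eq_nil_or_concat'
    · simp at hlen
    obtain ⟨c₀, ps, hγ, hps, hk⟩ := incomplete_parent_and_last_child hpet hα
    obtain ⟨c₁, qs, hδ, hqs, hl⟩ := incomplete_parent_and_last_child hpet hβ
    obtain rfl : γ = δ := ih (by simpa using hlen) hγ hδ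
    obtain rfl : ps = qs := List.ext_getElem? fun i => (hps i).symm.trans (hqs i)
    rw [show k = l by omega]

end IsPET

theorem pet_incomplete_unique {C R : Type}
    (Rules : Set (List (C × R) × (C × R))) (t : OTree (Judg C R))
    (hpet : IsPET Rules t) (n : ℕ) (α β : List ℕ)
    (hα : α.length = n) (hβ : β.length = n) (c c' : C)
    (h1 : t.label α = some (c, none)) (h2 : t.label β = some (c', none)) :
    α = β :=
  hpet.eq_of_incomplete_of_length_eq (hα.trans hβ.symm) h1 h2
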